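/- arXiv:math/0508608 — 2 statements merged into one kernel-verified Lean document; each statement's English description precedes it below -/
import Mathlib

section
/- W is the internal direct sum of its eigenspaces: the family of subspaces (W_χ), indexed by all characters χ : G →* kˣ, is independent and its supremum is all of W. -/
open Module

/-- The `χ`-eigenspace of a representation `ρ` of `G` on `W`:
`W_χ = {w ∈ W | ρ(g) w = χ(g) • w for all g ∈ G}`. -/
def Representation.charSpace {k G W : Type*} [Field k] [Monoid G]
    [AddCommGroup W] [Module k W]
    (ρ : Representation k G W) (χ : G →* kˣ) : Submodule k W where
  carrier := {w : W | ∀ g : G, ρ g w = (χ g : k) • w}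
  add_mem' := by
    intro a b ha hb g
    simp [map_add, ha g, hb g, smul_add]
  zero_mem' := by
    intro g
    simp
  smul_mem' := by
    intro c w hw g
    simp only [map_smul, hw g]
    rw [smul_comm]

/-!
Use the projections `e_χ = |G|⁻¹ ∑_g χ(g)⁻¹ ρ(g)`. By the first
orthogonality relation `e_χ` is the identity on `W_χ` and kills `W_χ'` for `χ' ≠ χ`, which gives
independence. By the second one, which needs enough characters to separate the points of `G`
(this is where the primitive root of unity of order `exp G` enters), `∑_χ e_χ = 1`, so the
eigenspaces span `W`.
-/

open Finset

section Orthogonality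

variable {R G : Type*} [CommRing R] [IsDomain R] [CommGroup G] [Fintype G]
  [HasEnoughRootsOfUnity R (Monoid.exponent G)] [Fintype (G →* Rˣ)]

theorem sum_monoidHom_units_apply_eq_zero {g : G} (hg : g ≠ 1) :
    ∑ χ : G →* Rˣ, (χ g : R) = 0 := by
  obtain ⟨φ, hφ⟩ := CommGroup.exists_apply_ne_one_of_hasEnoughRootsOfUnity G R hg
  have := sum_hom_units_eq_zero ((Units.coeHom R).comp (MonoidHom.eval g))
    fun h ↦ hφ (Units.ext (DFunLike.congr_fun h φ))
  simpa using this

theorem sum_monoidHom_units_apply [DecidableEq G] (g : G) :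
    ∑ χ : G →* Rˣ, (χ g : R) = if g = 1 then (Fintype.card G : R) else 0 := by
  split_ifs with hg
  · have hcard := CommGroup.card_monoidHom_of_hasEnoughRootsOfUnity G R
    rw [Nat.card_eq_fintype_card, Nat.card_eq_fintype_card] at hcard
    simp [hg, hcard]
  · exact sum_monoidHom_units_apply_eq_zero hg

end Orthogonality

namespace Representation

section Projection

variable {k G W : Type*} [Field k] [Group G] [Fintype G] [AddCommGroup W] [Module k W]
  (ρ : Representation k G W)

noncomputable def charProj (χ : G →* kˣ) : W →ₗ[k] W :=
  (Fintype.card G : k)⁻¹ • ∑ g : G, (χ g⁻¹ : k) • ρ g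

theorem charProj_apply (χ : G →* kˣ) (w : W) :
    ρ.charProj χ w = (Fintype.card G : k)⁻¹ • ∑ g : G, (χ g⁻¹ : k) • ρ g w := by
  simp [charProj, LinearMap.sum_apply]

theorem charProj_mem_charSpace (χ : G →* kˣ) (w : W) : ρ.charProj χ w ∈ ρ.charSpace χ := by
  intro h
  rw [charProj_apply, map_smul, map_sum, smul_comm]
  congr 1
  calc ∑ g : G, ρ h ((χ g⁻¹ : k) • ρ g w)
      = ∑ g : G, (χ (h⁻¹ * (h * g))⁻¹ : k) • ρ (h * g) w := by simp
    _ = ∑ g : G, (χ (h⁻¹ * g)⁻¹ : k) • ρ g w :=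
        Equiv.sum_comp (Equiv.mulLeft h) fun g ↦ (χ (h⁻¹ * g)⁻¹ : k) • ρ g w
    _ = (χ h : k) • ∑ g : G, (χ g⁻¹ : k) • ρ g w := by
        rw [smul_sum]
        refine sum_congr rfl fun g _ ↦ ?_
        rw [smul_smul, mul_inv_rev, inv_inv, map_mul, Units.val_mul, mul_comm]

theorem charProj_apply_of_mem_of_ne {χ χ' : G →* kˣ} (hne : χ' ≠ χ) {w : W}
    (hw : w ∈ ρ.charSpace χ') : ρ.charProj χ w = 0 := by
  have hterm (g : G) : (χ g⁻¹ : k) • ρ g w = (((χ⁻¹ * χ') g : kˣ) : k) • w := by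
    rw [hw g, smul_smul, map_inv, MonoidHom.mul_apply, MonoidHom.inv_apply, Units.val_mul]
  have hsum : ∑ g : G, (((χ⁻¹ * χ') g : kˣ) : k) = 0 :=
    sum_hom_units_eq_zero ((Units.coeHom k).comp (χ⁻¹ * χ')) fun h ↦
      hne (inv_mul_eq_one.mp (MonoidHom.ext fun g ↦ Units.ext (DFunLike.congr_fun h g))).symm
  rw [charProj_apply, sum_congr rfl fun g _ ↦ hterm g, ← sum_smul, hsum, zero_smul, smul_zero]

variable [NeZero (Fintype.card G : k)]

theorem charProj_apply_of_mem {χ : G →* kˣ} {w : W} (hw : w ∈ ρ.charSpace χ) :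
    ρ.charProj χ w = w := by
  have hterm (g : G) : (χ g⁻¹ : k) • ρ g w = w := by
    rw [hw g, smul_smul, ← Units.val_mul, ← map_mul, inv_mul_cancel, map_one, Units.val_one,
      one_smul]
  simp only [charProj_apply, hterm, sum_const, card_univ, ← Nat.cast_smul_eq_nsmul k, smul_smul,
    inv_mul_cancel₀ (NeZero.ne _), one_smul]

theorem iSupIndep_charSpace : iSupIndep fun χ : G →* kˣ ↦ ρ.charSpace χ := by
  intro χ
  rw [Submodule.disjoint_def]
  intro w hw hw'
  have hker : (⨆ (χ' : G →* kˣ) (_ : χ' ≠ χ), ρ.charSpace χ') ≤ LinearMap.ker (ρ.charProj χ) :=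
    iSup₂_le fun χ' hne _ hv ↦ ρ.charProj_apply_of_mem_of_ne hne hv
  rw [← ρ.charProj_apply_of_mem hw]
  exact hker hw'

end Projection

section Decomposition

variable {k G W : Type*} [Field k] [CommGroup G] [Fintype G] [AddCommGroup W] [Module k W]
  [NeZero (Fintype.card G : k)] [HasEnoughRootsOfUnity k (Monoid.exponent G)]
  (ρ : Representation k G W)

theorem sum_charProj [Fintype (G →* kˣ)] : ∑ χ : G →* kˣ, ρ.charProj χ = LinearMap.id := by
  classical
  ext w
  rw [LinearMap.sum_apply]
  calc ∑ χ : G →* kˣ, ρ.charProj χ w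
      = (Fintype.card G : k)⁻¹ • ∑ g : G, (∑ χ : G →* kˣ, (χ g⁻¹ : k)) • ρ g w := by
        simp only [charProj_apply, ← smul_sum, sum_smul]
        rw [sum_comm]
    _ = (Fintype.card G : k)⁻¹ • (Fintype.card G : k) • ρ 1 w := by
        simp only [sum_monoidHom_units_apply, inv_eq_one, ite_smul, zero_smul, Fintype.sum_ite_eq']
    _ = w := by
        rw [map_one, Module.End.one_apply, smul_smul, inv_mul_cancel₀ (NeZero.ne _), one_smul]

theorem iSup_charSpace_eq_top : ⨆ χ : G →* kˣ, ρ.charSpace χ = ⊤ := by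
  have := Fintype.ofFinite (G →* kˣ)
  refine eq_top_iff.mpr fun w _ ↦ ?_
  rw [← LinearMap.id_apply (R := k) w, ← ρ.sum_charProj, LinearMap.sum_apply]
  exact Submodule.sum_mem _ fun χ _ ↦ Submodule.mem_iSup_of_mem χ (ρ.charProj_mem_charSpace χ w)

end Decomposition

end Representation

theorem charSpace_iSupIndep_and_iSup_eq_top_general
    {k : Type*} [Field k] [CharZero k]
    {G : Type*} [CommGroup G] [Fintype G]
    {W : Type*} [AddCommGroup W] [Module k W]
    (hζ : ∃ ζ : k, IsPrimitiveRoot ζ (Monoid.exponent G))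
    (ρ : Representation k G W) :
    iSupIndep (fun χ : G →* kˣ => ρ.charSpace χ) ∧
      (⨆ χ : G →* kˣ, ρ.charSpace χ) = ⊤ := by
  have : NeZero (Monoid.exponent G) := ⟨Monoid.exponent_ne_zero_of_finite⟩
  have : HasEnoughRootsOfUnity k (Monoid.exponent G) := ⟨hζ, inferInstance⟩
  exact ⟨ρ.iSupIndep_charSpace, ρ.iSup_charSpace_eq_top⟩

/-- `W` is the internal direct sum of the eigenspaces `W_χ`, as `χ` ranges over all
characters `χ : G →* kˣ`: the family is independent and its supremum is `⊤`. -/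
theorem charSpace_iSupIndep_and_iSup_eq_top
    {k : Type*} [Field k] [CharZero k]
    {G : Type*} [CommGroup G] [Fintype G]
    {W : Type*} [AddCommGroup W] [Module k W] [FiniteDimensional k W]
    (hζ : ∃ ζ : k, IsPrimitiveRoot ζ (Monoid.exponent G))
    (ρ : Representation k G W) :
    iSupIndep (fun χ : G →* kˣ => ρ.charSpace χ) ∧
      (⨆ χ : G →* kˣ, ρ.charSpace χ) = ⊤ :=
  charSpace_iSupIndep_and_iSup_eq_top_general hζ ρ
end

section
/- Let H be a subgroup of G. Then dim_k W^H = ∑_{χ : G →* kˣ, χ trivial on H} dim_k W_χ, where W^H = {w ∈ W | ρ(h) w = w for all h ∈ H} and the sum ranges over all characters of G that are trivial on H. -/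
open Module

/-- The subspace `W^H = {w ∈ W | ρ(h) w = w for all h ∈ H}` of invariants under a
subgroup `H` of `G`. -/
def Representation.subgroupInvariants {k G W : Type*} [Field k] [Group G]
    [AddCommGroup W] [Module k W]
    (ρ : Representation k G W) (H : Subgroup G) : Submodule k W where
  carrier := {w : W | ∀ h ∈ H, ρ h w = w}
  add_mem' := by
    intro a b ha hb h hh
    simp [map_add, ha h hh, hb h hh]
  zero_mem' := by
    intro h hh
    simp
  smul_mem' := by
    intro c w hw h hh
    simp [map_smul, hw h hh]

/-!
The dimension of a space of invariants is the trace of the averaging projector onto it. So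
`dim W^H = |H|⁻¹ ∑_{h ∈ H} tr ρ(h)`, and, since `W_χ` is the space of invariants of `χ⁻¹ ⊗ ρ`,
`dim W_χ = |G|⁻¹ ∑_{g ∈ G} χ(g⁻¹) tr ρ(g)`. Summing the latter over the characters trivial on `H`
and using the orthogonality relation `∑_{χ|_H = 1} χ(g) = [G : H] · 1_H(g)` gives the first
expression, as an identity in `k`; characteristic zero turns it into an identity of dimensions.
-/

open LinearMap

namespace CommGroup

variable {G k : Type*} [CommGroup G] [Field k]

theorem sum_apply_domRestrictHom_ker [Finite G] [HasEnoughRootsOfUnity k (Monoid.exponent G)]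
    (H : Subgroup G) [Fintype (MonoidHom.domRestrictHom H kˣ).ker] (g : G) [Decidable (g ∈ H)] :
    ∑ χ : (MonoidHom.domRestrictHom H kˣ).ker, ((χ : G →* kˣ) g : k)
      = if g ∈ H then (H.index : k) else 0 := by
  let evalAt : (MonoidHom.domRestrictHom H kˣ).ker →* k :=
    (Units.coeHom k).comp ((MonoidHom.eval g).comp (Subgroup.subtype _))
  have hevalAt : evalAt = 1 ↔ g ∈ H := by
    rw [← forall_monoidHom_apply_eq_one_iff k H g, MonoidHom.ext_iff]
    simp only [evalAt, Subtype.forall, MonoidHom.mem_ker, MonoidHom.domRestrictHom_apply,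
      MonoidHom.domRestrict_eq_one_iff, MonoidHom.comp_apply, MonoidHom.one_apply,
      Units.coeHom_apply, Subgroup.coe_subtype, Units.val_eq_one]
    rfl
  by_cases hg : g ∈ H
  · have hker : ∀ χ : (MonoidHom.domRestrictHom H kˣ).ker, (χ : G →* kˣ) g = 1 :=
      fun χ ↦ MonoidHom.domRestrict_eq_one_iff.mp χ.2 g hg
    simp only [hker, Units.val_one, Finset.sum_const, Finset.card_univ, nsmul_eq_mul, mul_one, hg,
      if_true, ← Nat.card_eq_fintype_card, card_domRestrictHom_ker, Subgroup.index]
  · rw [if_neg hg]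
    exact sum_hom_units_eq_zero evalAt (mt hevalAt.mp hg)

theorem sum_domRestrictHom_ker_sum_apply_inv_mul [Fintype G]
    [HasEnoughRootsOfUnity k (Monoid.exponent G)] (H : Subgroup G) [Fintype H]
    [Fintype (MonoidHom.domRestrictHom H kˣ).ker] (f : G → k) :
    ∑ χ : (MonoidHom.domRestrictHom H kˣ).ker, ∑ g, ((χ : G →* kˣ) g⁻¹ : k) * f g
      = H.index * ∑ h : H, f h := by
  classical
  rw [Finset.sum_comm]
  simp only [← Finset.sum_mul, sum_apply_domRestrictHom_ker, inv_mem_iff, ite_mul, zero_mul]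
  rw [Finset.mul_sum, Finset.sum_ite, Finset.sum_const_zero, add_zero]
  exact Finset.sum_subtype _ (by simp) _

end CommGroup

namespace Representation

variable {k G W : Type*} [Field k] [Group G] [AddCommGroup W] [Module k W]

theorem finrank_invariants [Fintype G] [Invertible (Fintype.card G : k)] [FiniteDimensional k W]
    (ρ : Representation k G W) :
    (finrank k ρ.invariants : k) = ⅟(Fintype.card G : k) * ∑ g, trace k W (ρ g) := by
  rw [← ρ.isProj_averageMap.trace]
  simp [GroupAlgebra.average, map_sum]

def twist (ρ : Representation k G W) (χ : G →* kˣ) : Representation k G W where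
  toFun g := (χ g⁻¹ : k) • ρ g
  map_one' := by simp
  map_mul' g h := by
    rw [mul_inv_rev, map_mul, Units.val_mul, map_mul, mul_comm, smul_mul_smul]

theorem invariants_twist (ρ : Representation k G W) (χ : G →* kˣ) :
    (ρ.twist χ).invariants = ρ.charSpace χ := by
  ext w
  refine forall_congr' fun g ↦ ?_
  show ((χ g⁻¹ : kˣ) : k) • ρ g w = w ↔ ρ g w = (χ g : k) • w
  rw [map_inv, ← Units.smul_def, inv_smul_eq_iff, Units.smul_def]

theorem invariants_comp_subtype (ρ : Representation k G W) (H : Subgroup G) :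
    Representation.invariants (ρ.comp H.subtype) = ρ.subgroupInvariants H := by
  ext w
  exact Subtype.forall

theorem finrank_charSpace [Fintype G] [Invertible (Fintype.card G : k)] [FiniteDimensional k W]
    (ρ : Representation k G W) (χ : G →* kˣ) :
    (finrank k (ρ.charSpace χ) : k)
      = ⅟(Fintype.card G : k) * ∑ g, (χ g⁻¹ : k) * trace k W (ρ g) := by
  rw [← invariants_twist, finrank_invariants]
  simp only [twist, MonoidHom.coe_mk, OneHom.coe_mk, map_smul, smul_eq_mul]

theorem finrank_subgroupInvariants (ρ : Representation k G W) (H : Subgroup G) [Fintype H]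
    [Invertible (Fintype.card H : k)] [FiniteDimensional k W] :
    (finrank k (ρ.subgroupInvariants H) : k)
      = ⅟(Fintype.card H : k) * ∑ h : H, trace k W (ρ h) := by
  rw [← invariants_comp_subtype, finrank_invariants]
  rfl

end Representation

/-- `dim_k W^H = ∑_{χ : G →* kˣ, χ trivial on H} dim_k W_χ`. -/
theorem finrank_subgroupInvariants_eq_sum
    {k : Type*} [Field k] [CharZero k]
    {G : Type*} [CommGroup G] [Fintype G]
    {W : Type*} [AddCommGroup W] [Module k W] [FiniteDimensional k W]
    (hζ : ∃ ζ : k, IsPrimitiveRoot ζ (Monoid.exponent G))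
    (ρ : Representation k G W) (H : Subgroup G) :
    finrank k (ρ.subgroupInvariants H)
      = ∑ᶠ χ ∈ {χ : G →* kˣ | ∀ h ∈ H, χ h = 1}, finrank k (ρ.charSpace χ) := by
  classical
  have : NeZero (Monoid.exponent G) := ⟨Monoid.exponent_ne_zero_of_finite⟩
  have : HasEnoughRootsOfUnity k (Monoid.exponent G) := ⟨hζ, inferInstance⟩
  have := Fintype.ofFinite (G →* kˣ)
  have := invertibleOfNonzero (Nat.cast_ne_zero.mpr Fintype.card_ne_zero : (Fintype.card G : k) ≠ 0)
  have := invertibleOfNonzero (Nat.cast_ne_zero.mpr Fintype.card_ne_zero : (Fintype.card H : k) ≠ 0)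
  have hcard : (Fintype.card G : k) = Fintype.card H * H.index := by
    simp only [← Nat.card_eq_fintype_card, ← Nat.cast_mul, Subgroup.card_mul_index]
  have hchars : {χ : G →* kˣ | ∀ h ∈ H, χ h = 1} = (MonoidHom.domRestrictHom H kˣ).ker := by
    ext χ
    simp
  rw [hchars, ← finsum_set_coe_eq_finsum_mem, finsum_eq_sum_of_fintype]
  apply Nat.cast_injective (R := k)
  push_cast
  simp only [Representation.finrank_subgroupInvariants, Representation.finrank_charSpace,
    ← Finset.mul_sum, CommGroup.sum_domRestrictHom_ker_sum_apply_inv_mul, invOf_eq_inv, hcard]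
  have hindex : (H.index : k) ≠ 0 := Nat.cast_ne_zero.mpr H.index_ne_zero_of_finite
  field_simp
end
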